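/- arXiv:1805.09849 — 2 statements merged into one kernel-verified Lean document; each statement's English description precedes it below -/
import Mathlib

section
/- If A : X → Y is a compact injective linear operator between Hilbert spaces with singular system {(σ_j, v_j, u_j)}, and g = Σ_{j=1}^∞ β_j u_j ∈ Y satisfies Σ_j (β_j/σ_j)² < ∞, then f = Σ_j (β_j/σ_j) v_j ∈ X satisfies A f = g (Picard's theorem, sufficiency direction). -/
theorem Orthonormal.summable_smul_of_summable_norm_sq {𝕜 E ι : Type*} [RCLike 𝕜]
    [NormedAddCommGroup E] [InnerProductSpace 𝕜 E] [CompleteSpace E]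
    {v : ι → E} (hv : Orthonormal 𝕜 v) {c : ι → 𝕜} (hc : Summable fun i => ‖c i‖ ^ 2) :
    Summable fun i => c i • v i := by
  simpa only [LinearIsometry.toSpanSingleton_apply] using
    (hv.orthogonalFamily.summable_iff_norm_sq_summable c).mpr hc

theorem ContinuousLinearMap.map_tsum_smul_of_apply_eq_smul {𝕜 E F ι : Type*} [NormedField 𝕜]
    [NormedAddCommGroup E] [NormedSpace 𝕜 E] [NormedAddCommGroup F] [NormedSpace 𝕜 F]
    (A : E →L[𝕜] F) {σ : ι → 𝕜} {v : ι → E} {u : ι → F} (hAv : ∀ j, A (v j) = σ j • u j)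
    {a : ι → 𝕜} (ha : Summable fun j => a j • v j) :
    A (∑' j, a j • v j) = ∑' j, (a j * σ j) • u j := by
  rw [A.map_tsum ha]
  congr 1 with j
  rw [A.map_smul, hAv j, smul_smul]

theorem picard_sufficiency_general {X Y : Type*}
    [NormedAddCommGroup X] [InnerProductSpace ℝ X] [CompleteSpace X]
    [NormedAddCommGroup Y] [InnerProductSpace ℝ Y]
    (A : X →L[ℝ] Y)
    (σ : ℕ → ℝ) (v : ℕ → X) (u : ℕ → Y)
    (hσpos : ∀ j, 0 < σ j)
    (hv : Orthonormal ℝ v)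
    (hAv : ∀ j, A (v j) = σ j • u j)
    (g : Y) (β : ℕ → ℝ)
    (hg : g = ∑' j, β j • u j)
    (hPicard : Summable fun j => (β j / σ j) ^ 2) :
    A (∑' j, (β j / σ j) • v j) = g := by
  have hsum : Summable fun j => (β j / σ j) • v j :=
    hv.summable_smul_of_summable_norm_sq (by simpa only [Real.norm_eq_abs, sq_abs] using hPicard)
  rw [A.map_tsum_smul_of_apply_eq_smul hAv hsum, hg]
  congr 1 with j
  rw [div_mul_cancel₀ _ (hσpos j).ne']

theorem picard_sufficiency {X Y : Type*}
    [NormedAddCommGroup X] [InnerProductSpace ℝ X] [CompleteSpace X]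
    [NormedAddCommGroup Y] [InnerProductSpace ℝ Y] [CompleteSpace Y]
    (A : X →L[ℝ] Y) (hA : IsCompactOperator A) (hinj : Function.Injective A)
    (σ : ℕ → ℝ) (v : ℕ → X) (u : ℕ → Y)
    (hσpos : ∀ j, 0 < σ j) (hσanti : Antitone σ)
    (hσ0 : Filter.Tendsto σ Filter.atTop (nhds 0))
    (hv : Orthonormal ℝ v)
    (hvspan : (Submodule.span ℝ (Set.range v)).topologicalClosure = ⊤)
    (hu : Orthonormal ℝ u)
    (hAv : ∀ j, A (v j) = σ j • u j)
    (hAstaru : ∀ j, ContinuousLinearMap.adjoint A (u j) = σ j • v j)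
    (g : Y) (β : ℕ → ℝ) (hβ : ∀ j, β j = inner ℝ g (u j))
    (hg : g = ∑' j, β j • u j)
    (hPicard : Summable fun j => (β j / σ j) ^ 2) :
    A (∑' j, (β j / σ j) • v j) = g :=
  picard_sufficiency_general A σ v u hσpos hv hAv g β hg hPicard
end

section
/- If A : X → Y is a compact injective linear operator between Hilbert spaces with singular system {(σ_j, v_j, u_j)}, and f ∈ X satisfies A f = g, then Σ_{j=1}^∞ (⟨g, u_j⟩_Y / σ_j)² < ∞ and f = Σ_j σ_j^{-1} ⟨g, u_j⟩_Y v_j (Picard's theorem, necessity direction). -/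
/-!
Since `A* u_j = σ_j v_j`, the coefficient `⟪A f, u_j⟫ / σ_j` is the Fourier coefficient `⟪v_j, f⟫`;
Bessel's inequality gives summability, and completeness of `(v_j)` gives the expansion of `f`.
-/

open Submodule

theorem inner_apply_div_eq_inner_of_adjoint_apply_eq_smul {X Y : Type*}
    [NormedAddCommGroup X] [InnerProductSpace ℝ X] [CompleteSpace X]
    [NormedAddCommGroup Y] [InnerProductSpace ℝ Y] [CompleteSpace Y]
    {A : X →L[ℝ] Y} {u : Y} {v : X} {σ : ℝ} (hσ : σ ≠ 0)
    (hAstar : ContinuousLinearMap.adjoint A u = σ • v) (f : X) :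
    inner ℝ (A f) u / σ = inner ℝ v f := by
  rw [← ContinuousLinearMap.adjoint_inner_right, hAstar, real_inner_smul_right, real_inner_comm,
    mul_div_cancel_left₀ _ hσ]

theorem Orthonormal.hasSum_inner_smul_of_dense_span {𝕜 E ι : Type*} [RCLike 𝕜]
    [NormedAddCommGroup E] [InnerProductSpace 𝕜 E] [CompleteSpace E] {v : ι → E}
    (hv : Orthonormal 𝕜 v) (hspan : (span 𝕜 (Set.range v)).topologicalClosure = ⊤) (x : E) :
    HasSum (fun i => inner 𝕜 (v i) x • v i) x := by
  let b := HilbertBasis.mk hv hspan.ge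
  have hb : ⇑b = v := HilbertBasis.coe_mk hv hspan.ge
  simpa only [b.repr_apply_apply, hb] using b.hasSum_repr x

theorem picard_necessity_general {X Y : Type*}
    [NormedAddCommGroup X] [InnerProductSpace ℝ X] [CompleteSpace X]
    [NormedAddCommGroup Y] [InnerProductSpace ℝ Y] [CompleteSpace Y]
    (A : X →L[ℝ] Y)
    (σ : ℕ → ℝ) (v : ℕ → X) (u : ℕ → Y)
    (hσpos : ∀ j, 0 < σ j)
    (hv : Orthonormal ℝ v)
    (hvspan : (Submodule.span ℝ (Set.range v)).topologicalClosure = ⊤)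
    (hAstaru : ∀ j, ContinuousLinearMap.adjoint A (u j) = σ j • v j)
    (f : X) (g : Y) (hfg : A f = g) :
    (Summable fun j => ((inner ℝ g (u j) : ℝ) / σ j) ^ 2) ∧
      f = ∑' j, ((σ j)⁻¹ * (inner ℝ g (u j) : ℝ)) • v j := by
  have hcoeff : ∀ j, inner ℝ g (u j) / σ j = inner ℝ (v j) f := fun j =>
    hfg ▸ inner_apply_div_eq_inner_of_adjoint_apply_eq_smul (hσpos j).ne' (hAstaru j) f
  simp only [inv_mul_eq_div, hcoeff]
  refine ⟨?_, (hv.hasSum_inner_smul_of_dense_span hvspan f).tsum_eq.symm⟩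
  simpa only [Real.norm_eq_abs, sq_abs] using hv.inner_products_summable (x := f)

theorem picard_necessity {X Y : Type*}
    [NormedAddCommGroup X] [InnerProductSpace ℝ X] [CompleteSpace X]
    [NormedAddCommGroup Y] [InnerProductSpace ℝ Y] [CompleteSpace Y]
    (A : X →L[ℝ] Y) (hA : IsCompactOperator A) (hinj : Function.Injective A)
    (σ : ℕ → ℝ) (v : ℕ → X) (u : ℕ → Y)
    (hσpos : ∀ j, 0 < σ j)
    (hv : Orthonormal ℝ v)
    (hvspan : (Submodule.span ℝ (Set.range v)).topologicalClosure = ⊤)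
    (hu : Orthonormal ℝ u)
    (hAv : ∀ j, A (v j) = σ j • u j)
    (hAstaru : ∀ j, ContinuousLinearMap.adjoint A (u j) = σ j • v j)
    (f : X) (g : Y) (hfg : A f = g) :
    (Summable fun j => ((inner ℝ g (u j) : ℝ) / σ j) ^ 2) ∧
      f = ∑' j, ((σ j)⁻¹ * (inner ℝ g (u j) : ℝ)) • v j :=
  picard_necessity_general A σ v u hσpos hv hvspan hAstaru f g hfg
end
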